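/- arXiv:2306.08519 — 2 statements merged into one kernel-verified Lean document; each statement's English description precedes it below -/
import Mathlib

section
/- For every 1 ≤ j ≤ I−1 one has Σ_{k=1}^{j} θ(k)(τ(k)) = Σ_{k=1}^{j} θ(k)_{0−} + (I−j) · Σ_{k=1}^{j} γ(τ(k))·A(k)/(I−k). Moreover, if Σ_{k=1}^{I} θ(k)_{0−} = n, then Σ_{k=1}^{I} θ(k)(τ(k)) = n. -/
open MeasureTheory

/-- `a_Σ^{≥j} = Σ_{k=j}^{I} a(k)`. -/
noncomputable def aSig (I : ℕ) (a : ℕ → ℝ) (j : ℕ) : ℝ :=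
  ∑ k ∈ Finset.Icc j I, a k

/-- `A(j) = a(j) − a_Σ^{≥j}/(I−j+1)` for `j ≤ I−1`, and `A(I) = a(I) − a_Σ^{≥I−1}/2`. -/
noncomputable def Acoef (I : ℕ) (a : ℕ → ℝ) (j : ℕ) : ℝ :=
  if j = I then a I - aSig I a (I - 1) / 2
  else a j - aSig I a j / ((I : ℝ) - (j : ℝ) + 1)

/-- The largest index `j ≤ I−2` with `τ(j) ≤ t` (and `0` if none). -/
noncomputable def lastIdx (I : ℕ) (τ : ℕ → ℝ) (t : ℝ) : ℕ :=
  (Finset.filter (fun j => τ j ≤ t) (Finset.range (I - 1))).sup id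

/-- The candidate equilibrium stock price drift `μ`, defined piecewise:
for `t ∈ [τ(j), τ(j+1))` (with `0 ≤ j ≤ I−2` the largest index with `τ(j) ≤ t`),
`μ(t) = −κ(t)·(γ(t)·a_Σ^{≥j+1}/(I−j) + Σ_{k=1}^{j} γ(τ(k))·A(k)/(I−k))`, and
for `t ∈ [τ(I−1), T]`,
`μ(t) = −κ(t)·(γ(t)·a_Σ^{≥I−1}/2 + Σ_{k=1}^{I−2} γ(τ(k))·A(k)/(I−k))`. -/
noncomputable def muDrift (κ γ : ℝ → ℝ) (I : ℕ) (a : ℕ → ℝ) (τ : ℕ → ℝ) (t : ℝ) : ℝ :=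
  if t < τ (I - 1) then
    -(κ t) * (γ t * aSig I a (lastIdx I τ t + 1) / ((I : ℝ) - (lastIdx I τ t : ℝ))
      + ∑ k ∈ Finset.Icc 1 (lastIdx I τ t), γ (τ k) * Acoef I a k / ((I : ℝ) - (k : ℝ)))
  else
    -(κ t) * (γ t * aSig I a (I - 1) / 2
      + ∑ k ∈ Finset.Icc 1 (I - 2), γ (τ k) * Acoef I a k / ((I : ℝ) - (k : ℝ)))

/-- Agent `(j)`'s candidate optimal trading strategy:
`θ(j)(t) = θ(j)_{0−} + μ(t)/κ(t) + γ(t)·a(j)` for `t ≤ τ(j)`, frozen afterwards. -/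
noncomputable def thetaEq (κ γ : ℝ → ℝ) (I : ℕ) (a : ℕ → ℝ) (τ : ℕ → ℝ)
    (θ0 : ℕ → ℝ) (j : ℕ) (t : ℝ) : ℝ :=
  if t ≤ τ j then θ0 j + muDrift κ γ I a τ t / κ t + γ t * a j
  else θ0 j + muDrift κ γ I a τ (τ j) / κ (τ j) + γ (τ j) * a j

/-!
Everything rests on the identity `(I − j + 1)·A(j) = (I − j)·a(j) − a_Σ^{≥j+1}` for `j < I`.
It shows that the bracket `g·a_Σ^{≥m+1}/(I−m) + Σ_{k≤m} γ(τ(k))·A(k)/(I−k)` defining `μ` does not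
change when `m` moves past stop times at which `γ(τ(·))` equals the frozen value `g`, so at every
stop time `τ(k)` the drift may be evaluated with index `k`, even when several stop times coincide.
Summing `θ(k)(τ(k)) = θ(k)_{0−} + γ(τ(k))·a(k) − (bracket at index k)` then telescopes by the same
identity, and the last agent, who stops together with agent `I−1`, cancels the remaining sum.
-/

section Coefficients

variable (I : ℕ) (a : ℕ → ℝ)

lemma aSig_eq_add_aSig_succ {j : ℕ} (hj : j ≤ I) : aSig I a j = a j + aSig I a (j + 1) := by
  rw [aSig, Finset.Icc_eq_cons_Ioc hj, Finset.sum_cons, ← Finset.Icc_add_one_left_eq_Ioc, aSig]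

lemma aSig_self : aSig I a I = a I := by
  simp [aSig]

lemma Acoef_mul_of_lt {j : ℕ} (hj : j < I) :
    ((I : ℝ) - j + 1) * Acoef I a j = ((I : ℝ) - j) * a j - aSig I a (j + 1) := by
  have hpos : (0 : ℝ) < (I : ℝ) - j + 1 := by
    have : (j : ℝ) < I := by exact_mod_cast hj
    linarith
  rw [Acoef, if_neg hj.ne, aSig_eq_add_aSig_succ I a hj.le]
  field_simp
  ring

end Coefficients

section Drift

variable (γ : ℝ → ℝ) (I : ℕ) (a : ℕ → ℝ) (τ : ℕ → ℝ)

noncomputable def stoppedSum (m : ℕ) : ℝ :=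
  ∑ k ∈ Finset.Icc 1 m, γ (τ k) * Acoef I a k / ((I : ℝ) - (k : ℝ))

/-- On `[τ(j), τ(j+1))` one has `μ(t) = −κ(t) · driftBracket γ I a τ (γ t) j`. -/
noncomputable def driftBracket (g : ℝ) (m : ℕ) : ℝ :=
  g * aSig I a (m + 1) / ((I : ℝ) - (m : ℝ)) + stoppedSum γ I a τ m

lemma stoppedSum_succ (m : ℕ) :
    stoppedSum γ I a τ (m + 1)
      = stoppedSum γ I a τ m + γ (τ (m + 1)) * Acoef I a (m + 1) / ((I : ℝ) - ((m : ℝ) + 1)) := by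
  rw [stoppedSum, Finset.sum_Icc_succ_top (by omega), stoppedSum]
  push_cast
  rfl

lemma driftBracket_succ {g : ℝ} {m : ℕ} (hm : m + 1 < I) (hg : γ (τ (m + 1)) = g) :
    driftBracket γ I a τ g (m + 1) = driftBracket γ I a τ g m := by
  have key := Acoef_mul_of_lt I a hm
  have hpos : (0 : ℝ) < (I : ℝ) - ((m : ℝ) + 1) := by
    have : (m : ℝ) + 1 < I := by exact_mod_cast hm
    linarith
  have hpos' : (0 : ℝ) < (I : ℝ) - m := by linarith
  rw [driftBracket, driftBracket, stoppedSum_succ, hg, aSig_eq_add_aSig_succ I a hm.le]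
  push_cast at key ⊢
  field_simp
  linear_combination g * key

lemma driftBracket_eq_of_le {g : ℝ} {k m : ℕ} (hkm : k ≤ m) (hm : m < I)
    (hg : ∀ i, k < i → i ≤ m → γ (τ i) = g) :
    driftBracket γ I a τ g m = driftBracket γ I a τ g k := by
  induction m, hkm using Nat.le_induction with
  | base => rfl
  | succ m hkm ih =>
    rw [driftBracket_succ γ I a τ hm (hg _ (by omega) le_rfl),
      ih (by omega) fun i hi him => hg i hi (by omega)]

end Drift

section LastIndex

variable (I : ℕ) (τ : ℕ → ℝ) (t : ℝ)

lemma le_lastIdx {k : ℕ} (hk : k < I - 1) (ht : τ k ≤ t) : k ≤ lastIdx I τ t :=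
  Finset.le_sup (f := id) (Finset.mem_filter.mpr ⟨Finset.mem_range.mpr hk, ht⟩)

lemma lastIdx_lt (hI : 1 < I) : lastIdx I τ t < I - 1 := by
  rw [lastIdx, Finset.sup_lt_iff (by rw [Nat.bot_eq_zero]; omega)]
  intro j hj
  exact Finset.mem_range.mp (Finset.mem_filter.mp hj).1

lemma τ_lastIdx_le {k : ℕ} (hk : k < I - 1) (ht : τ k ≤ t) : τ (lastIdx I τ t) ≤ t := by
  obtain ⟨j, hj, hjsup⟩ := Finset.exists_mem_eq_sup
    (Finset.filter (fun j => τ j ≤ t) (Finset.range (I - 1)))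
    ⟨k, Finset.mem_filter.mpr ⟨Finset.mem_range.mpr hk, ht⟩⟩ id
  rw [lastIdx, hjsup]
  exact (Finset.mem_filter.mp hj).2

end LastIndex

section Strategy

variable (κ γ : ℝ → ℝ) (I : ℕ) (a : ℕ → ℝ) (τ : ℕ → ℝ)

lemma muDrift_of_lt {t : ℝ} (ht : t < τ (I - 1)) :
    muDrift κ γ I a τ t = -κ t * driftBracket γ I a τ (γ t) (lastIdx I τ t) := by
  rw [muDrift, if_pos ht]
  rfl

lemma muDrift_of_ge {t : ℝ} (hI : 2 ≤ I) (ht : τ (I - 1) ≤ t) :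
    muDrift κ γ I a τ t = -κ t * driftBracket γ I a τ (γ t) (I - 2) := by
  have hcast : (I : ℝ) - ((I - 2 : ℕ) : ℝ) = 2 := by
    rw [Nat.cast_sub hI]
    ring
  rw [muDrift, if_neg ht.not_gt, driftBracket, stoppedSum, hcast, show I - 2 + 1 = I - 1 by omega]

lemma muDrift_stopTime (hI : 2 ≤ I) (hτ : MonotoneOn τ (Set.Iic I)) {k : ℕ} (hk : k < I) :
    muDrift κ γ I a τ (τ k) = -κ (τ k) * driftBracket γ I a τ (γ (τ k)) k := by
  have hflat : ∀ m, m ≤ I → τ m ≤ τ k → ∀ i, k < i → i ≤ m → γ (τ i) = γ (τ k) := by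
    intro m hmI hmk i hki him
    have hmem : ∀ {n}, n ≤ m → n ∈ Set.Iic I := fun hn => Set.mem_Iic.mpr (hn.trans hmI)
    rw [le_antisymm ((hτ (hmem him) (hmem le_rfl) him).trans hmk)
      (hτ (hmem (hki.le.trans him)) (hmem him) hki.le)]
  by_cases h : τ k < τ (I - 1)
  · have hk' : k < I - 1 := by
      by_contra! hk'
      exact h.ne (by rw [show k = I - 1 by omega])
    have hlast := lastIdx_lt I τ (τ k) (by omega)
    rw [muDrift_of_lt κ γ I a τ h, driftBracket_eq_of_le γ I a τ (le_lastIdx I τ _ hk' le_rfl)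
      (by omega) (hflat _ (by omega) (τ_lastIdx_le I τ _ hk' le_rfl))]
  · have hτk : τ (I - 1) = τ k :=
      le_antisymm (not_lt.mp h) (hτ (Set.mem_Iic.mpr hk.le) (Set.mem_Iic.mpr (by omega)) (by omega))
    have hsucc := driftBracket_succ γ I a τ (m := I - 2) (g := γ (τ k)) (by omega)
      (by rw [show I - 2 + 1 = I - 1 by omega, hτk])
    rw [muDrift_of_ge κ γ I a τ hI (not_lt.mp h), ← hsucc, show I - 2 + 1 = I - 1 by omega,
      driftBracket_eq_of_le γ I a τ (by omega) (by omega) (hflat _ (by omega) hτk.le)]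

variable (θ0 : ℕ → ℝ)

lemma thetaEq_stopTime (hI : 2 ≤ I) (hτ : MonotoneOn τ (Set.Iic I)) {k : ℕ} (hk : k < I)
    (hκ : κ (τ k) ≠ 0) :
    thetaEq κ γ I a τ θ0 k (τ k) = θ0 k + γ (τ k) * a k - driftBracket γ I a τ (γ (τ k)) k := by
  rw [thetaEq, if_pos le_rfl, muDrift_stopTime κ γ I a τ hI hτ hk, neg_mul, neg_div,
    mul_div_cancel_left₀ _ hκ]
  ring

lemma sum_thetaEq_stopTime (hI : 2 ≤ I) (hτ : MonotoneOn τ (Set.Iic I))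
    (hκ : ∀ k < I, κ (τ k) ≠ 0) {j : ℕ} (hj : j ≤ I - 1) :
    ∑ k ∈ Finset.Icc 1 j, thetaEq κ γ I a τ θ0 k (τ k)
      = ∑ k ∈ Finset.Icc 1 j, θ0 k + ((I : ℝ) - j) * stoppedSum γ I a τ j := by
  induction j with
  | zero => simp [stoppedSum]
  | succ j ih =>
    have hjI : j + 1 < I := by omega
    have key := Acoef_mul_of_lt I a hjI
    have hpos : (0 : ℝ) < (I : ℝ) - ((j : ℝ) + 1) := by
      have : (j : ℝ) + 1 < I := by exact_mod_cast hjI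
      linarith
    rw [Finset.sum_Icc_succ_top (by omega), Finset.sum_Icc_succ_top (by omega), ih (by omega),
      thetaEq_stopTime κ γ I a τ θ0 hI hτ hjI (hκ _ hjI), driftBracket, stoppedSum_succ]
    push_cast at key ⊢
    field_simp
    linear_combination -γ (τ (j + 1)) * key

lemma thetaEq_last (hI : 2 ≤ I) (hτ : MonotoneOn τ (Set.Iic I)) (hτlast : τ (I - 1) = τ I)
    (hκ : κ (τ I) ≠ 0) :
    thetaEq κ γ I a τ θ0 I (τ I) = θ0 I - stoppedSum γ I a τ (I - 1) := by
  rw [← hτlast] at hκ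
  rw [thetaEq, if_pos le_rfl, ← hτlast, muDrift_stopTime κ γ I a τ hI hτ (by omega), driftBracket,
    show I - 1 + 1 = I by omega, aSig_self, Nat.cast_pred (by omega), sub_sub_cancel, neg_mul,
    neg_div, mul_div_cancel_left₀ _ hκ]
  ring

end Strategy

theorem stmt13_general (T : ℝ) (κ γ : ℝ → ℝ)
    (hκpos : ∀ t ∈ Set.Icc (0 : ℝ) T, 0 < κ t)
    (I : ℕ) (hI : 3 ≤ I) (a : ℕ → ℝ) (τ : ℕ → ℝ)
    (hτ0 : τ 0 = 0) (hτmono : ∀ j k : ℕ, j ≤ k → k ≤ I → τ j ≤ τ k)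
    (hτlast : τ (I - 1) = τ I) (hτT : τ (I - 1) < T)
    (θ0 : ℕ → ℝ) (n : ℝ) :
    (∀ j : ℕ, 1 ≤ j → j ≤ I - 1 →
      ∑ k ∈ Finset.Icc 1 j, thetaEq κ γ I a τ θ0 k (τ k)
        = ∑ k ∈ Finset.Icc 1 j, θ0 k
          + ((I : ℝ) - (j : ℝ)) * ∑ k ∈ Finset.Icc 1 j,
              γ (τ k) * Acoef I a k / ((I : ℝ) - (k : ℝ))) ∧
    ((∑ k ∈ Finset.Icc 1 I, θ0 k) = n →
      ∑ k ∈ Finset.Icc 1 I, thetaEq κ γ I a τ θ0 k (τ k) = n) := by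
  have hτ : MonotoneOn τ (Set.Iic I) := fun j hj k hk hjk => hτmono j k hjk hk
  have hκ : ∀ k ≤ I, κ (τ k) ≠ 0 := fun k hk =>
    (hκpos _ ⟨hτ0 ▸ hτmono 0 k k.zero_le hk,
      (hτmono k I hk le_rfl).trans (by rw [← hτlast]; exact hτT.le)⟩).ne'
  have hsum : ∀ j ≤ I - 1, _ := fun j hj =>
    sum_thetaEq_stopTime κ γ I a τ θ0 (by omega) hτ (fun k hk => hκ k hk.le) hj
  refine ⟨fun j _ hj => hsum j hj, fun hn => ?_⟩
  have hsplit (f : ℕ → ℝ) :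
      ∑ k ∈ Finset.Icc 1 I, f k = ∑ k ∈ Finset.Icc 1 (I - 1), f k + f I := by
    conv_lhs => rw [← Nat.sub_add_cancel (by omega : 1 ≤ I), Finset.sum_Icc_succ_top (by omega),
      Nat.sub_add_cancel (by omega : 1 ≤ I)]
  rw [hsplit] at hn ⊢
  rw [hsum _ le_rfl, Nat.cast_pred (by omega), sub_sub_cancel,
    thetaEq_last κ γ I a τ θ0 (by omega) hτ hτlast (hκ I le_rfl), ← hn]
  ring

/-- for `1 ≤ j ≤ I−1`,
`Σ_{k=1}^{j} θ(k)(τ(k)) = Σ_{k=1}^{j} θ(k)_{0−} + (I−j)·Σ_{k=1}^{j} γ(τ(k))·A(k)/(I−k)`;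
moreover, if `Σ_{k=1}^{I} θ(k)_{0−} = n` then `Σ_{k=1}^{I} θ(k)(τ(k)) = n`. -/
theorem stmt13 (T : ℝ) (κ γ : ℝ → ℝ) (hT : 0 < T)
    (hκcont : ContinuousOn κ (Set.Icc 0 T))
    (hκpos : ∀ t ∈ Set.Icc (0 : ℝ) T, 0 < κ t)
    (hγcont : ContinuousOn γ (Set.Icc 0 T))
    (hγmono : StrictMonoOn γ (Set.Icc 0 T))
    (hγ0 : γ 0 = 0) (hγT : γ T = 1)
    (I : ℕ) (hI : 3 ≤ I) (a : ℕ → ℝ) (τ : ℕ → ℝ)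
    (hτ0 : τ 0 = 0) (hτmono : ∀ j k : ℕ, j ≤ k → k ≤ I → τ j ≤ τ k)
    (hτlast : τ (I - 1) = τ I) (hτT : τ (I - 1) < T)
    (θ0 : ℕ → ℝ) (n : ℝ) :
    (∀ j : ℕ, 1 ≤ j → j ≤ I - 1 →
      ∑ k ∈ Finset.Icc 1 j, thetaEq κ γ I a τ θ0 k (τ k)
        = ∑ k ∈ Finset.Icc 1 j, θ0 k
          + ((I : ℝ) - (j : ℝ)) * ∑ k ∈ Finset.Icc 1 j,
              γ (τ k) * Acoef I a k / ((I : ℝ) - (k : ℝ))) ∧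
    ((∑ k ∈ Finset.Icc 1 I, θ0 k) = n →
      ∑ k ∈ Finset.Icc 1 I, thetaEq κ γ I a τ θ0 k (τ k) = n) :=
  stmt13_general T κ γ hκpos I hI a τ hτ0 hτmono hτlast hτT θ0 n
end

section
/- One has ∫_0^T μ(t) dt = −∫_0^T κ(t)·γ(t)·a_Σ^{≥1}/I dt + Σ_{k=1}^{I−2} (A(k)/(I−k)) · F(τ(k)); equivalently, −∫_0^T μ(t) dt = ∫_0^T κ(t)·γ(t)·a_Σ^{≥1}/I dt − Σ_{k=1}^{I−2} (A(k)/(I−k)) · ∫_{τ(k)}^T κ(t)·(γ(t) − γ(τ(k))) dt. -/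
open MeasureTheory

/-- `F(t) = ∫_t^T κ(u)(γ(u) − γ(t)) du`. -/
noncomputable def Ffun (T : ℝ) (κ γ : ℝ → ℝ) (t : ℝ) : ℝ :=
  ∫ u in t..T, κ u * (γ u - γ t)

/-! On `[τ(j), τ(j+1))` the coefficient of `γ(t)` in `μ(t)` is `a_Σ^{≥j+1}/(I−j)`, which telescopes
to `a_Σ^{≥1}/I − Σ_{k≤j} A(k)/(I−k)` since `A(k)/(I−k) = a_Σ^{≥k}/(I−k+1) − a_Σ^{≥k+1}/(I−k)`.
So on all of `[0,T]`,
`μ(t) = −κ(t)γ(t)a_Σ^{≥1}/I + Σ_{k=1}^{I−2} A(k)/(I−k) · 1_{t ≥ τ(k)} · κ(t)(γ(t) − γ(τ(k)))`,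
and the integral of the `k`-th indicator term is `F(τ(k))`. -/

section Telescoping

variable (I : ℕ) (a : ℕ → ℝ)

lemma aSig_eq_add {k : ℕ} (hk : k ≤ I) : aSig I a k = a k + aSig I a (k + 1) := by
  rw [aSig, aSig, Finset.Icc_eq_cons_Ioc hk, Finset.sum_cons, Finset.Icc_add_one_left_eq_Ioc]

lemma aSig_succ_div_eq {k : ℕ} (hk : k < I) :
    aSig I a (k + 1) / ((I : ℝ) - k) =
      aSig I a k / ((I : ℝ) - k + 1) - Acoef I a k / ((I : ℝ) - k) := by
  have hkI : (k : ℝ) < I := by exact_mod_cast hk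
  rw [Acoef, if_neg hk.ne, aSig_eq_add I a hk.le]
  field_simp [show (I : ℝ) - k ≠ 0 by linarith, show (I : ℝ) - k + 1 ≠ 0 by linarith]
  ring

lemma aSig_succ_div_eq_sub_sum {j : ℕ} (hj : j < I) :
    aSig I a (j + 1) / ((I : ℝ) - j) =
      aSig I a 1 / I - ∑ k ∈ Finset.Icc 1 j, Acoef I a k / ((I : ℝ) - k) := by
  induction j with
  | zero => simp
  | succ j ih =>
    have hstep := aSig_succ_div_eq I a hj
    rw [show (I : ℝ) - ((j + 1 : ℕ) : ℝ) + 1 = I - j by push_cast; ring] at hstep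
    rw [hstep, ih (by omega), Finset.sum_Icc_succ_top (by omega)]
    ring

lemma drift_branch_eq {j : ℕ} (hj : j < I) (x y : ℝ) (g : ℕ → ℝ) :
    -x * (y * aSig I a (j + 1) / ((I : ℝ) - j)
        + ∑ k ∈ Finset.Icc 1 j, g k * Acoef I a k / ((I : ℝ) - k))
      = -(x * y * aSig I a 1 / I)
        + ∑ k ∈ Finset.Icc 1 j, Acoef I a k / ((I : ℝ) - k) * (x * (y - g k)) := by
  have hsum : ∑ k ∈ Finset.Icc 1 j, Acoef I a k / ((I : ℝ) - k) * (x * (y - g k))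
      = x * y * ∑ k ∈ Finset.Icc 1 j, Acoef I a k / ((I : ℝ) - k)
        - x * ∑ k ∈ Finset.Icc 1 j, g k * Acoef I a k / ((I : ℝ) - k) := by
    rw [Finset.mul_sum, Finset.mul_sum, ← Finset.sum_sub_distrib]
    exact Finset.sum_congr rfl fun _ _ => by ring
  rw [hsum, mul_div_assoc, aSig_succ_div_eq_sub_sum I a hj]
  ring

end Telescoping

lemma Finset.sum_Icc_ite_eq_sum_Icc {M : Type*} [AddCommMonoid M] {n j : ℕ} (hj : j ≤ n)
    {p : ℕ → Prop} [DecidablePred p] (hp : ∀ k ∈ Finset.Icc 1 n, p k ↔ k ≤ j) (f : ℕ → M) :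
    ∑ k ∈ Finset.Icc 1 n, (if p k then f k else 0) = ∑ k ∈ Finset.Icc 1 j, f k := by
  rw [← Finset.sum_filter]
  congr 1
  ext k
  simp only [Finset.mem_filter, Finset.mem_Icc]
  constructor
  · rintro ⟨hk, hpk⟩
    exact ⟨hk.1, (hp k (Finset.mem_Icc.2 hk)).1 hpk⟩
  · rintro ⟨hk1, hkj⟩
    exact ⟨⟨hk1, hkj.trans hj⟩, (hp k (Finset.mem_Icc.2 ⟨hk1, hkj.trans hj⟩)).2 hkj⟩

section LastIndex

variable {I : ℕ} {τ : ℕ → ℝ} {t : ℝ}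

lemma lastIdx_le_sub_two : lastIdx I τ t ≤ I - 2 :=
  Finset.sup_le fun j hj => by
    have := Finset.mem_range.1 (Finset.mem_filter.1 hj).1
    simp only [id]
    omega

lemma tau_lastIdx_le (h0 : τ 0 ≤ t) : τ (lastIdx I τ t) ≤ t := by
  rcases (Finset.filter (fun j => τ j ≤ t) (Finset.range (I - 1))).eq_empty_or_nonempty
    with hempty | hne
  · rwa [lastIdx, hempty, Finset.sup_empty]
  · obtain ⟨j, hj, hsup⟩ := Finset.exists_mem_eq_sup _ hne id
    rw [lastIdx, hsup]
    exact (Finset.mem_filter.1 hj).2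

lemma tau_le_iff_le_lastIdx (hτmono : ∀ j k : ℕ, j ≤ k → k ≤ I → τ j ≤ τ k) (h0 : τ 0 ≤ t)
    {k : ℕ} (hk : k ≤ I - 2) : τ k ≤ t ↔ k ≤ lastIdx I τ t := by
  constructor
  · intro hkt
    rcases Nat.eq_zero_or_pos k with rfl | hkpos
    · exact Nat.zero_le _
    have hkI : k < I - 1 := by omega
    exact Finset.le_sup (f := id) (Finset.mem_filter.2 ⟨Finset.mem_range.2 hkI, hkt⟩)
  · intro hkj
    exact (hτmono k _ hkj (lastIdx_le_sub_two.trans (by omega))).trans (tau_lastIdx_le h0)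

end LastIndex

lemma muDrift_eq (κ γ : ℝ → ℝ) {I : ℕ} (hI : 2 ≤ I) (a : ℕ → ℝ) {τ : ℕ → ℝ}
    (hτmono : ∀ j k : ℕ, j ≤ k → k ≤ I → τ j ≤ τ k) {t : ℝ} (h0 : τ 0 ≤ t) :
    muDrift κ γ I a τ t = -(κ t * γ t * aSig I a 1 / I)
      + ∑ k ∈ Finset.Icc 1 (I - 2), Acoef I a k / ((I : ℝ) - k) *
          (Set.Ici (τ k)).indicator (fun u => κ u * (γ u - γ (τ k))) t := by
  have hsplit : ∀ j ≤ I - 2, (∀ k ∈ Finset.Icc 1 (I - 2), τ k ≤ t ↔ k ≤ j) →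
      -(κ t * γ t * aSig I a 1 / I)
        + ∑ k ∈ Finset.Icc 1 (I - 2), Acoef I a k / ((I : ℝ) - k) *
          (Set.Ici (τ k)).indicator (fun u => κ u * (γ u - γ (τ k))) t
      = -κ t * (γ t * aSig I a (j + 1) / ((I : ℝ) - j)
        + ∑ k ∈ Finset.Icc 1 j, γ (τ k) * Acoef I a k / ((I : ℝ) - k)) := by
    intro j hj hp
    simp only [Set.indicator_apply, Set.mem_Ici, mul_ite, mul_zero]
    rw [Finset.sum_Icc_ite_eq_sum_Icc hj hp, drift_branch_eq I a (by omega)]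
  rw [muDrift]
  split_ifs with ht
  · exact (hsplit _ lastIdx_le_sub_two fun k hk =>
      tau_le_iff_le_lastIdx hτmono h0 (Finset.mem_Icc.1 hk).2).symm
  · have hall : ∀ k ∈ Finset.Icc 1 (I - 2), τ k ≤ t ↔ k ≤ I - 2 := fun k hk => by
      have hk := Finset.mem_Icc.1 hk
      exact iff_of_true ((hτmono k (I - 1) (by omega) (by omega)).trans (not_lt.1 ht)) hk.2
    rw [hsplit (I - 2) le_rfl hall, show I - 2 + 1 = I - 1 by omega,
      show (I : ℝ) - ((I - 2 : ℕ) : ℝ) = 2 by rw [Nat.cast_sub hI]; ring]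

section IndicatorIci

open intervalIntegral

variable {f : ℝ → ℝ} {a b c : ℝ}

lemma eqOn_indicator_Ici_zero (hac : a ≤ c) :
    Set.EqOn 0 ((Set.Ici c).indicator f) (Set.uIoo a c) := fun x hx => by
  rw [Set.uIoo_of_le hac] at hx
  exact (Set.indicator_of_notMem (not_le.2 hx.2) f).symm

lemma eqOn_indicator_Ici_self (hcb : c ≤ b) :
    Set.EqOn f ((Set.Ici c).indicator f) (Set.uIoo c b) := fun x hx => by
  rw [Set.uIoo_of_le hcb] at hx
  exact (Set.indicator_of_mem (Set.mem_Ici.2 hx.1.le) f).symm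

lemma IntervalIntegrable.indicator_Ici (hac : a ≤ c) (hcb : c ≤ b)
    (hf : IntervalIntegrable f volume c b) :
    IntervalIntegrable ((Set.Ici c).indicator f) volume a b :=
  ((intervalIntegrable_const (μ := volume) (c := 0)).congr_uIoo
    (eqOn_indicator_Ici_zero hac)).trans (hf.congr_uIoo (eqOn_indicator_Ici_self hcb))

lemma integral_indicator_Ici (hac : a ≤ c) (hcb : c ≤ b) (hf : IntervalIntegrable f volume c b) :
    ∫ x in a..b, (Set.Ici c).indicator f x = ∫ x in c..b, f x := by
  have h₁ := (intervalIntegrable_const (μ := volume) (c := 0)).congr_uIoo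
    (eqOn_indicator_Ici_zero (f := f) hac)
  have h₂ := hf.congr_uIoo (eqOn_indicator_Ici_self hcb)
  rw [← integral_add_adjacent_intervals h₁ h₂, ← integral_congr_uIoo (eqOn_indicator_Ici_zero hac),
    ← integral_congr_uIoo (eqOn_indicator_Ici_self hcb)]
  simp

end IndicatorIci

lemma integral_muDrift {T : ℝ} {κ γ : ℝ → ℝ} (hT : 0 < T)
    (hκcont : ContinuousOn κ (Set.Icc 0 T)) (hγcont : ContinuousOn γ (Set.Icc 0 T))
    {I : ℕ} (hI : 2 ≤ I) (a : ℕ → ℝ) {τ : ℕ → ℝ}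
    (hτ0 : τ 0 = 0) (hτmono : ∀ j k : ℕ, j ≤ k → k ≤ I → τ j ≤ τ k) (hτT : τ (I - 1) < T) :
    ∫ t in (0 : ℝ)..T, muDrift κ γ I a τ t
      = -(∫ t in (0 : ℝ)..T, κ t * γ t * aSig I a 1 / I)
        + ∑ k ∈ Finset.Icc 1 (I - 2), Acoef I a k / ((I : ℝ) - k) * Ffun T κ γ (τ k) := by
  have hτ_mem : ∀ k ∈ Finset.Icc 1 (I - 2), τ k ∈ Set.Icc 0 T := fun k hk => by
    have hk := Finset.mem_Icc.1 hk
    exact ⟨hτ0 ▸ hτmono 0 k k.zero_le (by omega),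
      ((hτmono k (I - 1) (by omega) (by omega)).trans_lt hτT).le⟩
  have hg : ∀ k ∈ Finset.Icc 1 (I - 2),
      IntervalIntegrable (fun u => κ u * (γ u - γ (τ k))) volume (τ k) T := fun k hk =>
    ((hκcont.mul (hγcont.sub continuousOn_const)).mono
      (Set.Icc_subset_Icc_left (hτ_mem k hk).1)).intervalIntegrable_of_Icc (hτ_mem k hk).2
  have hneg : IntervalIntegrable (fun t => -(κ t * γ t * aSig I a 1 / I)) volume 0 T :=
    (((hκcont.mul hγcont).mul continuousOn_const).div_const _).intervalIntegrable_of_Icc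
      hT.le |>.neg
  have hind : ∀ k ∈ Finset.Icc 1 (I - 2), IntervalIntegrable (fun t => Acoef I a k /
      ((I : ℝ) - k) * (Set.Ici (τ k)).indicator (fun u => κ u * (γ u - γ (τ k))) t) volume 0 T :=
    fun k hk => ((hg k hk).indicator_Ici (hτ_mem k hk).1 (hτ_mem k hk).2).const_mul _
  have hsum : IntervalIntegrable (fun t => ∑ k ∈ Finset.Icc 1 (I - 2), Acoef I a k /
      ((I : ℝ) - k) * (Set.Ici (τ k)).indicator (fun u => κ u * (γ u - γ (τ k))) t) volume 0 T := by
    simpa only [Finset.sum_fn] using IntervalIntegrable.sum _ hind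
  rw [intervalIntegral.integral_congr fun t ht => muDrift_eq κ γ hI a hτmono
      (hτ0 ▸ (Set.uIcc_of_le hT.le ▸ ht).1 : τ 0 ≤ t),
    intervalIntegral.integral_add hneg hsum, intervalIntegral.integral_neg,
    intervalIntegral.integral_finsetSum hind]
  refine congrArg _ (Finset.sum_congr rfl fun k hk => ?_)
  rw [intervalIntegral.integral_const_mul,
    integral_indicator_Ici (hτ_mem k hk).1 (hτ_mem k hk).2 (hg k hk), Ffun]

theorem stmt17_general (T : ℝ) (κ γ : ℝ → ℝ) (hT : 0 < T)
    (hκcont : ContinuousOn κ (Set.Icc 0 T))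
    (hγcont : ContinuousOn γ (Set.Icc 0 T))
    (I : ℕ) (hI : 3 ≤ I) (a : ℕ → ℝ) (τ : ℕ → ℝ)
    (hτ0 : τ 0 = 0) (hτmono : ∀ j k : ℕ, j ≤ k → k ≤ I → τ j ≤ τ k)
    (hτT : τ (I - 1) < T)
    :
    (∫ t in (0 : ℝ)..T, muDrift κ γ I a τ t)
        = -(∫ t in (0 : ℝ)..T, κ t * γ t * aSig I a 1 / (I : ℝ))
          + ∑ k ∈ Finset.Icc 1 (I - 2),
              Acoef I a k / ((I : ℝ) - (k : ℝ)) * Ffun T κ γ (τ k) ∧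
    -(∫ t in (0 : ℝ)..T, muDrift κ γ I a τ t)
        = (∫ t in (0 : ℝ)..T, κ t * γ t * aSig I a 1 / (I : ℝ))
          - ∑ k ∈ Finset.Icc 1 (I - 2),
              Acoef I a k / ((I : ℝ) - (k : ℝ))
                * ∫ t in (τ k)..T, κ t * (γ t - γ (τ k)) := by
  have key := integral_muDrift hT hκcont hγcont (by omega) a hτ0 hτmono hτT
  exact ⟨key, by rw [key]; simp only [Ffun]; ring⟩

/-- `∫_0^T μ(t) dt = −∫_0^T κ(t)·γ(t)·a_Σ^{≥1}/I dt
  + Σ_{k=1}^{I−2} (A(k)/(I−k))·F(τ(k))`; equivalently,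
`−∫_0^T μ(t) dt = ∫_0^T κ(t)·γ(t)·a_Σ^{≥1}/I dt
  − Σ_{k=1}^{I−2} (A(k)/(I−k))·∫_{τ(k)}^T κ(t)·(γ(t) − γ(τ(k))) dt`. -/
theorem stmt17 (T : ℝ) (κ γ : ℝ → ℝ) (hT : 0 < T)
    (hκcont : ContinuousOn κ (Set.Icc 0 T))
    (hκpos : ∀ t ∈ Set.Icc (0 : ℝ) T, 0 < κ t)
    (hγcont : ContinuousOn γ (Set.Icc 0 T))
    (hγmono : StrictMonoOn γ (Set.Icc 0 T))
    (hγ0 : γ 0 = 0) (hγT : γ T = 1)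
    (I : ℕ) (hI : 3 ≤ I) (a : ℕ → ℝ) (τ : ℕ → ℝ)
    (hτ0 : τ 0 = 0) (hτmono : ∀ j k : ℕ, j ≤ k → k ≤ I → τ j ≤ τ k)
    (hτlast : τ (I - 1) = τ I) (hτT : τ (I - 1) < T)
    :
    (∫ t in (0 : ℝ)..T, muDrift κ γ I a τ t)
        = -(∫ t in (0 : ℝ)..T, κ t * γ t * aSig I a 1 / (I : ℝ))
          + ∑ k ∈ Finset.Icc 1 (I - 2),
              Acoef I a k / ((I : ℝ) - (k : ℝ)) * Ffun T κ γ (τ k) ∧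
    -(∫ t in (0 : ℝ)..T, muDrift κ γ I a τ t)
        = (∫ t in (0 : ℝ)..T, κ t * γ t * aSig I a 1 / (I : ℝ))
          - ∑ k ∈ Finset.Icc 1 (I - 2),
              Acoef I a k / ((I : ℝ) - (k : ℝ))
                * ∫ t in (τ k)..T, κ t * (γ t - γ (τ k)) :=
  stmt17_general T κ γ hT hκcont hγcont I hI a τ hτ0 hτmono hτT
end
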